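/- Let b ≥ 6 be a real number and write {b} := b − ⌊b⌋. Then: d(a,b) ≥ √(a/(2b)) for all a ≥ 1; d(a,b) ≥ 1 for all a ∈ [1, b + ⌊b⌋]; and for every integer k with 0 ≤ k < √(2b) + {b}, one has d(a,b) ≥ a/(b + ⌊b⌋ + k) for all a ∈ [α_k, 2(⌊b⌋+k)+1] and d(a,b) ≥ (2(⌊b⌋+k)+1)/(b + ⌊b⌋ + k) for all a ∈ [2(⌊b⌋+k)+1, β_k], where α_0 := b + ⌊b⌋, α_1 := (b + ⌊b⌋ + 1)(2⌊b⌋ + 1)/(b + ⌊b⌋), α_k := (b + ⌊b⌋ + k)²/(2b) for k ≥ 2, and β_k := 2b·((2(⌊b⌋+k)+1)/(b + ⌊b⌋ + k))² for k ≥ 1. -/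

import Mathlib

/-- `Nseq a b k` is the `k`-th term (indexed from 0) of the nondecreasing sequence listing,
with multiplicities, all numbers `m*a + n*b` with `m n : ℕ`; equivalently the least `t ≥ 0`
such that there are at least `k+1` pairs `(m,n)` with `m*a + n*b ≤ t`. -/
noncomputable def Nseq (a b : ℝ) (k : ℕ) : ℝ :=
  sInf {t : ℝ | 0 ≤ t ∧ k + 1 ≤ {p : ℕ × ℕ | (p.1 : ℝ) * a + (p.2 : ℝ) * b ≤ t}.ncard}

/-- `Mseq c d k = min {m*c + n*d : (m+1)*(n+1) ≥ k+1}`. -/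
noncomputable def Mseq (c d : ℝ) (k : ℕ) : ℝ :=
  sInf {t : ℝ | ∃ m n : ℕ, k + 1 ≤ (m + 1) * (n + 1) ∧ t = (m : ℝ) * c + (n : ℝ) * d}

/-- `dFun a b = inf {λ > 0 : N_k(1,a) ≤ λ M_k(1,b) for all k}`. -/
noncomputable def dFun (a b : ℝ) : ℝ :=
  sInf {l : ℝ | 0 < l ∧ ∀ k : ℕ, Nseq 1 a k ≤ l * Mseq 1 b k}

/-- The left endpoints `α_k` for the conjectural staircase with parameter `b`. -/
noncomputable def alphB (b : ℝ) : ℕ → ℝ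
  | 0 => b + (⌊b⌋ : ℝ)
  | 1 => (b + (⌊b⌋ : ℝ) + 1) * (2 * (⌊b⌋ : ℝ) + 1) / (b + (⌊b⌋ : ℝ))
  | k => (b + (⌊b⌋ : ℝ) + (k : ℝ)) ^ 2 / (2 * b)

/-- The right endpoints `β_k` for the conjectural staircase with parameter `b`. -/
noncomputable def betB (b : ℝ) : ℕ → ℝ
  | 0 => (b + (⌊b⌋ : ℝ) + 1) * (2 * (⌊b⌋ : ℝ) + 1) / (b + (⌊b⌋ : ℝ))
  | k => 2 * b * ((2 * ((⌊b⌋ : ℝ) + (k : ℝ)) + 1) / (b + (⌊b⌋ : ℝ) + (k : ℝ))) ^ 2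

/-!
Every admissible `λ` satisfies `N_k(1,a) ≤ λ M_k(1,b)` for each single `k`, and each bound comes
from a well-chosen `k`.

Counting lattice points row by row under the line `m a + n b = s` gives at most
`(s + a + b)² / (2ab)` of them, so `N_k(1,a) ≳ √(2ak)`, while `M_k(1,b) ≲ 2√(bk)`
(take `m + 1 ≈ √(bk)`, `n + 1 ≈ √(k/b)`); letting `k → ∞` yields `λ ≥ √(a/(2b))`.

The values of `m + n a` below `min a j` all have `n = 0`, so `N_j(1,a) ≥ min a j`; together with
`M_1(1,b) ≤ 1` and `M_{2n+1}(1,b) ≤ n + b` (at `(m, n) = (n, 1)`), the choices `j = 1` and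
`j = 2(⌊b⌋ + k) + 1` give the remaining bounds.
-/
open Finset

def latticeBelow (a b t : ℝ) : Set (ℕ × ℕ) := {p | (p.1 : ℝ) * a + (p.2 : ℝ) * b ≤ t}

section Nseq

variable {a b : ℝ}

lemma finite_latticeBelow (ha : 0 < a) (hb : 0 < b) (t : ℝ) : (latticeBelow a b t).Finite := by
  refine (range (⌊t / a⌋₊ + 1) ×ˢ range (⌊t / b⌋₊ + 1)).finite_toSet.subset ?_
  rintro ⟨m, n⟩ (h : (m : ℝ) * a + n * b ≤ t)
  have hm : (m : ℝ) * a ≤ t := by nlinarith [(by positivity : (0 : ℝ) ≤ n * b)]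
  have hn : (n : ℝ) * b ≤ t := by nlinarith [(by positivity : (0 : ℝ) ≤ m * a)]
  simp only [coe_product, Set.mem_prod, mem_coe, mem_range, Nat.lt_succ_iff]
  exact ⟨Nat.le_floor ((le_div_iff₀ ha).2 hm), Nat.le_floor ((le_div_iff₀ hb).2 hn)⟩

lemma le_ncard_latticeBelow (ha : 0 < a) (hb : 0 < b) {k m n : ℕ}
    (h : k + 1 ≤ (m + 1) * (n + 1)) : k + 1 ≤ (latticeBelow a b (m * a + n * b)).ncard := by
  calc k + 1 ≤ (range (m + 1) ×ˢ range (n + 1)).card := by simpa using h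
    _ = ((range (m + 1) ×ˢ range (n + 1) : Finset (ℕ × ℕ)) : Set (ℕ × ℕ)).ncard :=
      (Set.ncard_coe_finset _).symm
    _ ≤ _ := Set.ncard_le_ncard ?_ (finite_latticeBelow ha hb _)
  rintro ⟨i, j⟩ hij
  simp only [coe_product, Set.mem_prod, mem_coe, mem_range, Nat.lt_succ_iff] at hij
  change (i : ℝ) * a + j * b ≤ m * a + n * b
  gcongr
  · exact_mod_cast hij.1
  · exact_mod_cast hij.2

lemma Nseq_le (ha : 0 < a) (hb : 0 < b) {k m n : ℕ} (h : k + 1 ≤ (m + 1) * (n + 1)) :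
    Nseq a b k ≤ m * a + n * b :=
  csInf_le ⟨0, fun _ ht => ht.1⟩ ⟨by positivity, le_ncard_latticeBelow ha hb h⟩

lemma Nseq_nonneg (a b : ℝ) (k : ℕ) : 0 ≤ Nseq a b k :=
  Real.sInf_nonneg fun _ ht => ht.1

lemma le_Nseq (ha : 0 < a) (hb : 0 < b) {k : ℕ} {c : ℝ}
    (h : ∀ s, 0 ≤ s → s < c → (latticeBelow a b s).ncard ≤ k) : c ≤ Nseq a b k := by
  refine le_csInf
    ⟨k * a + (0 : ℕ) * b, by positivity, le_ncard_latticeBelow ha hb (by simp)⟩ ?_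
  rintro s ⟨hs, hk⟩
  by_contra! hsc
  have := h s hs hsc
  change k + 1 ≤ (latticeBelow a b s).ncard at hk
  omega

lemma two_mul_mul_ncard_latticeBelow_le (ha : 0 < a) (hb : 0 < b) {s : ℝ} (hs : 0 ≤ s) :
    2 * a * b * (latticeBelow a b s).ncard ≤ (s + a + b) ^ 2 := by
  classical
  set N := ⌊s / b⌋₊
  set F : ℕ → ℝ := fun n => (s + a + b - n * b) ^ 2 / (2 * a * b)
  have hsub : latticeBelow a b s ⊆
      ↑((range (N + 1)).biUnion fun n => range (⌊(s - n * b) / a⌋₊ + 1) ×ˢ {n}) := by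
    rintro ⟨m, n⟩ (h : (m : ℝ) * a + n * b ≤ s)
    have hm : (m : ℝ) ≤ (s - n * b) / a := by
      rw [le_div_iff₀ ha]; linarith
    have hn : (n : ℝ) ≤ s / b := by
      rw [le_div_iff₀ hb]; nlinarith [(by positivity : (0 : ℝ) ≤ m * a)]
    simp only [coe_biUnion, coe_range, Set.mem_Iio, Set.mem_iUnion, coe_product, coe_singleton,
      Set.mem_prod, Set.mem_singleton_iff, exists_prop, Nat.lt_succ_iff]
    exact ⟨n, Nat.le_floor hn, Nat.le_floor hm, rfl⟩
  -- `F n - F (n + 1)` exceeds the length `(s - n b) / a + 1` of row `n`, so the rows telescope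
  have hrow : ∀ n ∈ range (N + 1),
      (⌊(s - n * b) / a⌋₊ : ℝ) + 1 ≤ F n - F (n + 1) := by
    intro n hn
    have hnb : (n : ℝ) * b ≤ s := by
      have : (n : ℝ) ≤ s / b := (Nat.cast_le.2 (Nat.lt_succ_iff.1 (mem_range.1 hn))).trans
        (Nat.floor_le (by positivity))
      rwa [le_div_iff₀ hb] at this
    have := Nat.floor_le (div_nonneg (sub_nonneg.2 hnb) ha.le)
    have hF : F n - F (n + 1) = (s - n * b) / a + 1 + b / (2 * a) := by
      simp only [F]; push_cast; field_simp; ring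
    rw [hF]
    linarith [(by positivity : (0 : ℝ) ≤ b / (2 * a))]
  have hcount : ((latticeBelow a b s).ncard : ℝ) ≤ F 0 :=
    calc ((latticeBelow a b s).ncard : ℝ)
        ≤ (∑ n ∈ range (N + 1), (⌊(s - n * b) / a⌋₊ + 1 : ℕ) : ℕ) := by
          gcongr
          refine (Set.ncard_le_ncard hsub (finite_toSet _)).trans ?_
          rw [Set.ncard_coe_finset]
          exact card_biUnion_le.trans (by simp)
      _ ≤ ∑ n ∈ range (N + 1), (F n - F (n + 1)) := by push_cast; exact sum_le_sum hrow
      _ = F 0 - F (N + 1) := sum_range_sub' F _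
      _ ≤ F 0 := sub_le_self _ (by positivity)
  have : F 0 = (s + a + b) ^ 2 / (2 * a * b) := by simp [F]
  rw [this, le_div_iff₀ (by positivity)] at hcount
  linarith

lemma two_mul_mul_succ_le_sq_Nseq (ha : 0 < a) (hb : 0 < b) (k : ℕ) :
    2 * a * b * (k + 1) ≤ (Nseq a b k + a + b) ^ 2 := by
  have : √(2 * a * b * (k + 1)) - a - b ≤ Nseq a b k := le_Nseq ha hb fun s hs hlt => by
    have hsq : (s + a + b) ^ 2 < 2 * a * b * (k + 1) :=
      (Real.lt_sqrt (by positivity)).1 (by linarith)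
    have hlt' : ((latticeBelow a b s).ncard : ℝ) < k + 1 :=
      lt_of_mul_lt_mul_left ((two_mul_mul_ncard_latticeBelow_le ha hb hs).trans_lt hsq)
        (by positivity)
    exact_mod_cast Nat.lt_succ_iff.1 (by exact_mod_cast hlt')
  exact (Real.sqrt_le_left (by linarith [Nseq_nonneg a b k])).1 (by linarith)

end Nseq

section Mseq

variable {c d : ℝ}

lemma Mseq_le (hc : 0 ≤ c) (hd : 0 ≤ d) {k m n : ℕ} (h : k + 1 ≤ (m + 1) * (n + 1)) :
    Mseq c d k ≤ m * c + n * d :=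
  csInf_le ⟨0, by rintro t ⟨m', n', -, rfl⟩; positivity⟩ ⟨m, n, h, rfl⟩

lemma le_Mseq {k : ℕ} {x : ℝ}
    (h : ∀ m n : ℕ, k + 1 ≤ (m + 1) * (n + 1) → x ≤ m * c + n * d) : x ≤ Mseq c d k :=
  le_csInf ⟨_, k, 0, by simp, rfl⟩ (by rintro t ⟨m, n, hmn, rfl⟩; exact h m n hmn)

end Mseq

lemma Nseq_le_mul_Mseq {a b c d l : ℝ} (ha : 0 < a) (hb : 0 < b) (hl : 0 < l)
    (hac : a ≤ l * c) (hbd : b ≤ l * d) (k : ℕ) : Nseq a b k ≤ l * Mseq c d k := by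
  rw [← div_le_iff₀' hl]
  refine le_Mseq fun m n hmn => (div_le_iff₀' hl).2 ?_
  calc Nseq a b k ≤ m * a + n * b := Nseq_le ha hb hmn
    _ ≤ m * (l * c) + n * (l * d) := by gcongr
    _ = l * (m * c + n * d) := by ring

section dFun

variable {a b : ℝ}

lemma le_dFun (ha : 0 < a) (hb : 0 < b) {x : ℝ}
    (h : ∀ l, 0 < l → (∀ k, Nseq 1 a k ≤ l * Mseq 1 b k) → x ≤ l) : x ≤ dFun a b := by
  have hl : 0 < 1 + a / b := by positivity
  refine le_csInf ⟨1 + a / b, hl, Nseq_le_mul_Mseq one_pos ha hl ?_ ?_⟩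
    fun l ⟨hl, hlk⟩ => h l hl hlk
  · simp only [mul_one, le_add_iff_nonneg_right]; positivity
  · rw [add_mul, div_mul_cancel₀ a hb.ne']; linarith

lemma min_le_Nseq_one (ha : 0 < a) (j : ℕ) : min a j ≤ Nseq 1 a j := by
  refine le_Nseq one_pos ha fun s _ hs => ?_
  have hsub : latticeBelow 1 a s ⊆ ↑(range j ×ˢ range 1) := by
    rintro ⟨m, n⟩ (hmn : (m : ℝ) * 1 + n * a ≤ s)
    obtain rfl : n = 0 := by
      by_contra hn
      have : (1 : ℝ) ≤ n := by exact_mod_cast Nat.one_le_iff_ne_zero.2 hn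
      nlinarith [min_le_left a j]
    rw [Nat.cast_zero, zero_mul, add_zero, mul_one] at hmn
    have : (m : ℝ) < j := by linarith [min_le_right a j]
    simpa using (by exact_mod_cast this : m < j)
  have := Set.ncard_le_ncard hsub
  rwa [Set.ncard_coe_finset, card_product, card_range, card_range, mul_one] at this

lemma min_div_le_dFun (ha : 0 < a) (hb : 0 < b) {j m n : ℕ} (h : j + 1 ≤ (m + 1) * (n + 1)) :
    min a j / (m + n * b) ≤ dFun a b :=
  le_dFun ha hb fun l hl hlk => div_le_of_le_mul₀ (by positivity) hl.le <| calc
    min a j ≤ Nseq 1 a j := min_le_Nseq_one ha j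
    _ ≤ l * Mseq 1 b j := hlk j
    _ ≤ l * (m + n * b) := by gcongr; simpa using Mseq_le zero_le_one hb.le h

lemma le_of_forall_mul_succ_le_mul_succ_add {x y C : ℝ}
    (h : ∀ n : ℕ, x * (n + 1) ≤ y * (n + 1) + C) : x ≤ y := by
  by_contra! hxy
  obtain ⟨n, hn⟩ := exists_nat_gt (C / (x - y))
  rw [div_lt_iff₀ (sub_pos.2 hxy)] at hn
  nlinarith [h n]

lemma sqrt_div_le_dFun (ha : 0 < a) (hb : 0 < b) : √(a / (2 * b)) ≤ dFun a b := by
  refine le_dFun ha hb fun l hl hlk => ?_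
  set c := √(a / (2 * b))
  have hc : (2 * b * c) ^ 2 = 2 * 1 * a * b := by
    rw [mul_pow, Real.sq_sqrt (by positivity)]; field_simp
  refine le_of_mul_le_mul_left ?_ (by positivity : 0 < 2 * b)
  refine le_of_forall_mul_succ_le_mul_succ_add (C := 1 + a) fun n => ?_
  -- `k + 1 = (m + 1) (n + 1)` with `m + 1 ≈ (n + 1) b` is near-optimal for `M_k(1,b)`
  set m := ⌊(n + 1) * b⌋₊
  set k := m * (n + 1) + n
  have hk : k + 1 = (m + 1) * (n + 1) := by simp only [k]; ring
  have hm : (m : ℝ) ≤ (n + 1) * b := Nat.floor_le (by positivity)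
  have hm' : (n + 1) * b < m + 1 := Nat.lt_floor_add_one _
  have hkb : (n + 1) ^ 2 * b ≤ k + 1 := by
    have : (k : ℝ) + 1 = (m + 1) * (n + 1) := by exact_mod_cast hk
    rw [this]; nlinarith
  have hM : Mseq 1 b k ≤ 2 * b * (n + 1) := by
    nlinarith [Mseq_le zero_le_one hb.le hk.le]
  have hN : Nseq 1 a k ≤ 2 * b * l * (n + 1) :=
    (hlk k).trans (by nlinarith [mul_le_mul_of_nonneg_left hM hl.le])
  have hvol := two_mul_mul_succ_le_sq_Nseq one_pos ha k
  have hsq : (2 * b * c * (n + 1)) ^ 2 ≤ (Nseq 1 a k + 1 + a) ^ 2 := by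
    rw [mul_pow, hc]; nlinarith
  have := (pow_le_pow_iff_left₀ (by positivity) (by linarith [Nseq_nonneg 1 a k])
    two_ne_zero).1 hsq
  linarith

end dFun

lemma alphB_pos {b : ℝ} (hb : 0 < b) (k : ℕ) : 0 < alphB b k := by
  have : (0 : ℝ) ≤ ⌊b⌋ := by exact_mod_cast Int.floor_nonneg.2 hb.le
  match k with
  | 0 => exact add_pos_of_pos_of_nonneg hb this
  | 1 => exact div_pos (by positivity) (by positivity)
  | k + 2 => exact div_pos (by positivity) (by positivity)

theorem staircase_lower_bounds (b : ℝ) (hb : 6 ≤ b) :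
    (∀ a : ℝ, 1 ≤ a → Real.sqrt (a / (2 * b)) ≤ dFun a b) ∧
    (∀ a ∈ Set.Icc (1 : ℝ) (b + (⌊b⌋ : ℝ)), 1 ≤ dFun a b) ∧
    (∀ k : ℕ, (k : ℝ) < Real.sqrt (2 * b) + Int.fract b →
      (∀ a ∈ Set.Icc (alphB b k) (2 * ((⌊b⌋ : ℝ) + (k : ℝ)) + 1),
        a / (b + (⌊b⌋ : ℝ) + (k : ℝ)) ≤ dFun a b) ∧
      (∀ a ∈ Set.Icc (2 * ((⌊b⌋ : ℝ) + (k : ℝ)) + 1) (betB b k),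
        (2 * ((⌊b⌋ : ℝ) + (k : ℝ)) + 1) / (b + (⌊b⌋ : ℝ) + (k : ℝ)) ≤ dFun a b)) := by
  have hb0 : 0 < b := by linarith
  have step (a : ℝ) (ha : 0 < a) (k : ℕ) :
      min a (2 * ((⌊b⌋ : ℝ) + k) + 1) / (b + ⌊b⌋ + k) ≤ dFun a b := by
    have h := min_div_le_dFun ha hb0 (j := 2 * (⌊b⌋₊ + k) + 1) (m := ⌊b⌋₊ + k) (n := 1)
      (le_of_eq (by ring))
    push_cast [natCast_floor_eq_intCast_floor hb0.le] at h
    convert h using 2; ring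
  refine ⟨fun a ha => sqrt_div_le_dFun (by linarith) hb0, ?_, fun k _ => ⟨?_, ?_⟩⟩
  · rintro a ⟨ha, -⟩
    have h := min_div_le_dFun (by linarith) hb0 (j := 1) (m := 1) (n := 0) le_rfl
    rwa [Nat.cast_one, Nat.cast_zero, zero_mul, add_zero, div_one, min_eq_right ha] at h
  · rintro a ⟨ha, ha'⟩
    simpa [min_eq_left ha'] using step a ((alphB_pos hb0 k).trans_le ha) k
  · rintro a ⟨ha, -⟩
    simpa [min_eq_right ha] using step a (lt_of_lt_of_le (by positivity) ha) k
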